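/- Let u, b, K_f, K_c > 0, L > 0, l* ∈ ℝ, and let l : ℝ → ℝ be differentiable with L/2 < l(t) < L for all t; set X(t) = l(t) - l*. Let ρ̃_f, ρ̃_c : ℝ × ℝ → ℝ be continuously differentiable with ∂_t ρ̃_f = -u ∂_x ρ̃_f and ∂_t ρ̃_c = u ∂_x ρ̃_c everywhere, and suppose l'(t) = -b(ρ̃_f(l(t),t) + ρ̃_c(l(t),t)) for all t. Define w_c(x,t) = ρ̃_c(x,t) - K_c ( X(t) - (b/u)∫_{l(t)}^{x} ρ̃_c(ξ,t) dξ - (b/u)∫_{2l(t)-x}^{l(t)} ρ̃_f(ξ,t) dξ ). Then for all t and all x ∈ (l(t), L): ∂_t w_c(x,t) - u ∂_x w_c(x,t) = (K_c b / u) l'(t) ( ρ̃_f(l(t),t) - ρ̃_c(l(t),t) - 2 ρ̃_f(2l(t)-x, t) ). -/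

import Mathlib

open ContinuousLinearMap Filter

/-! Both densities are travelling waves, `ρ̃_c(x,t) = ρ̃_c(x + ut, 0)` and
`ρ̃_f(x,t) = ρ̃_f(x - ut, 0)`, so each integral in `w_c` is a difference of values of a primitive of
the initial profile, and differentiating it gives a Leibniz rule without interior term. Applying
`∂_t - u ∂_x`, the `ρ̃_c` term vanishes by its transport equation, and what remains contains
`l̇ + b (ρ̃_f(l) + ρ̃_c(l))`, which vanishes by the Rankine–Hugoniot condition. -/

theorem eq_initial_profile_of_transport {E : Type*} [NormedAddCommGroup E] [NormedSpace ℝ E]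
    {ρ : ℝ × ℝ → E} (hρ : Differentiable ℝ ρ) {c : ℝ}
    (htransport : ∀ x t, fderiv ℝ ρ (x, t) (0, 1) = c • fderiv ℝ ρ (x, t) (1, 0)) (x t : ℝ) :
    ρ (x, t) = ρ (x + c * t, 0) := by
  have hcharacteristic : ∀ s, HasDerivAt (fun s => ρ (x + c * s, t - s)) 0 s := by
    intro s
    have hline : HasDerivAt (fun s : ℝ => (x + c * s, t - s))
        (c • ((1 : ℝ), (0 : ℝ)) - (0, 1)) s := by
      simpa [Prod.ext_iff] using (((hasDerivAt_id' s).const_mul c).const_add x).prodMk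
        ((hasDerivAt_id' s).const_sub t)
    have hdir : fderiv ℝ ρ (x + c * s, t - s) (c • ((1 : ℝ), (0 : ℝ)) - (0, 1)) = 0 := by
      rw [map_sub, map_smul, htransport, sub_self]
    exact hdir ▸ (hρ _).hasFDerivAt.comp_hasDerivAt s hline
  simpa using is_const_of_deriv_eq_zero (fun s => (hcharacteristic s).differentiableAt)
    (fun s => (hcharacteristic s).deriv) 0 t

/-- The `c • snd` terms are the interior term `∫_α^β ∂_t ρ = c (ρ(β) - ρ(α))` of the Leibniz rule. -/
theorem hasFDerivAt_integral_of_transport {ρ : ℝ × ℝ → ℝ} (hρ : Differentiable ℝ ρ) {c : ℝ}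
    (htransport : ∀ x t, fderiv ℝ ρ (x, t) (0, 1) = c * fderiv ℝ ρ (x, t) (1, 0))
    {α β : ℝ × ℝ → ℝ} {α' β' : ℝ × ℝ →L[ℝ] ℝ} {p : ℝ × ℝ}
    (hα : HasFDerivAt α α' p) (hβ : HasFDerivAt β β' p) :
    HasFDerivAt (fun q => ∫ ξ in α q..β q, ρ (ξ, q.2))
      (ρ (β p, p.2) • (β' + c • snd ℝ ℝ ℝ) - ρ (α p, p.2) • (α' + c • snd ℝ ℝ ℝ)) p := by
  set ψ : ℝ → ℝ := fun y => ρ (y, 0)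
  have hprofile : ∀ x t, ρ (x, t) = ψ (x + c * t) :=
    eq_initial_profile_of_transport hρ htransport
  have hψ : Continuous ψ := hρ.continuous.comp (by fun_prop)
  set Ψ : ℝ → ℝ := fun y => ∫ s in (0 : ℝ)..y, ψ s
  have hΨ : ∀ y, HasDerivAt Ψ (ψ y) y := fun y => (hψ.integral_hasStrictDerivAt 0 y).hasDerivAt
  have hprimitive : (fun q => ∫ ξ in α q..β q, ρ (ξ, q.2)) =
      fun q => Ψ (β q + c * q.2) - Ψ (α q + c * q.2) := by
    funext q
    simp only [hprofile, intervalIntegral.integral_comp_add_right]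
    exact (intervalIntegral.integral_interval_sub_left (hψ.intervalIntegrable _ _)
      (hψ.intervalIntegrable _ _)).symm
  rw [hprimitive, hprofile, hprofile]
  exact ((hΨ _).comp_hasFDerivAt p (hβ.add (hasFDerivAt_snd.const_mul c))).sub
    ((hΨ _).comp_hasFDerivAt p (hα.add (hasFDerivAt_snd.const_mul c)))

theorem target_pde_congested_regime_general
    (u b Kc L lstar : ℝ)
    (hu : 0 < u)
    (l : ℝ → ℝ) (hl : Differentiable ℝ l)
    (X : ℝ → ℝ) (hX : ∀ t, X t = l t - lstar)
    (ρf ρc : ℝ × ℝ → ℝ) (hρf : ContDiff ℝ 1 ρf) (hρc : ContDiff ℝ 1 ρc)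
    (hpdef : ∀ x t : ℝ,
      fderiv ℝ ρf (x, t) ((0 : ℝ), (1 : ℝ)) =
        -u * fderiv ℝ ρf (x, t) ((1 : ℝ), (0 : ℝ)))
    (hpdec : ∀ x t : ℝ,
      fderiv ℝ ρc (x, t) ((0 : ℝ), (1 : ℝ)) =
        u * fderiv ℝ ρc (x, t) ((1 : ℝ), (0 : ℝ)))
    (hode : ∀ t, deriv l t = -b * (ρf (l t, t) + ρc (l t, t)))
    (wc : ℝ × ℝ → ℝ)
    (hwc : ∀ x t : ℝ, wc (x, t) =
      ρc (x, t) - Kc * (X t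
        - (b / u) * (∫ ξ in (l t)..x, ρc (ξ, t))
        - (b / u) * (∫ ξ in (2 * l t - x)..(l t), ρf (ξ, t)))) :
    ∀ t : ℝ, ∀ x ∈ Set.Ioo (l t) L,
      fderiv ℝ wc (x, t) ((0 : ℝ), (1 : ℝ)) -
        u * fderiv ℝ wc (x, t) ((1 : ℝ), (0 : ℝ)) =
      (Kc * b / u) * deriv l t *
        (ρf (l t, t) - ρc (l t, t) - 2 * ρf (2 * l t - x, t)) := by
  intro t x _
  have hρfd : Differentiable ℝ ρf := hρf.differentiable one_ne_zero
  have hρcd : Differentiable ℝ ρc := hρc.differentiable one_ne_zero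
  have hlq : HasFDerivAt (fun q : ℝ × ℝ => l q.2) (deriv l t • snd ℝ ℝ ℝ) (x, t) :=
    (hl t).hasDerivAt.comp_hasFDerivAt (x, t) hasFDerivAt_snd
  have hXq : HasFDerivAt (fun q : ℝ × ℝ => X q.2) (deriv l t • snd ℝ ℝ ℝ) (x, t) :=
    (hlq.sub_const lstar).congr_of_eventuallyEq (Eventually.of_forall fun q => hX q.2)
  have hIc := hasFDerivAt_integral_of_transport hρcd hpdec hlq hasFDerivAt_fst
  have hIf := hasFDerivAt_integral_of_transport hρfd hpdef
    ((hlq.const_mul 2).sub hasFDerivAt_fst) hlq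
  have hwcd := ((hρcd (x, t)).hasFDerivAt.sub (((hXq.sub (hIc.const_mul (b / u))).sub
    (hIf.const_mul (b / u))).const_mul Kc)).congr_of_eventuallyEq
    (Eventually.of_forall fun q => hwc q.1 q.2)
  rw [hwcd.fderiv]
  simp only [sub_apply, add_apply, smul_apply, coe_fst', coe_snd', Pi.sub_apply, smul_eq_mul]
  rw [hpdec, hode]
  field_simp
  ring

/-- Target PDE for the congested-regime backstepping variable in the case
`l(t) ∈ (L/2, L)`: the transformed state `w_c` satisfies
`∂_t w_c - u ∂_x w_c = (K_c b/u) l̇(t) (ρ̃_f(l,t) - ρ̃_c(l,t) - 2ρ̃_f(2l-x,t))`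
for `x ∈ (l(t), L)`. -/
theorem target_pde_congested_regime
    (u b Kf Kc L lstar : ℝ)
    (hu : 0 < u) (hb : 0 < b) (hKf : 0 < Kf) (hKc : 0 < Kc) (hL : 0 < L)
    (l : ℝ → ℝ) (hl : Differentiable ℝ l)
    (hlrange : ∀ t, L / 2 < l t ∧ l t < L)
    (X : ℝ → ℝ) (hX : ∀ t, X t = l t - lstar)
    (ρf ρc : ℝ × ℝ → ℝ) (hρf : ContDiff ℝ 1 ρf) (hρc : ContDiff ℝ 1 ρc)
    (hpdef : ∀ x t : ℝ,
      fderiv ℝ ρf (x, t) ((0 : ℝ), (1 : ℝ)) =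
        -u * fderiv ℝ ρf (x, t) ((1 : ℝ), (0 : ℝ)))
    (hpdec : ∀ x t : ℝ,
      fderiv ℝ ρc (x, t) ((0 : ℝ), (1 : ℝ)) =
        u * fderiv ℝ ρc (x, t) ((1 : ℝ), (0 : ℝ)))
    (hode : ∀ t, deriv l t = -b * (ρf (l t, t) + ρc (l t, t)))
    (wc : ℝ × ℝ → ℝ)
    (hwc : ∀ x t : ℝ, wc (x, t) =
      ρc (x, t) - Kc * (X t
        - (b / u) * (∫ ξ in (l t)..x, ρc (ξ, t))
        - (b / u) * (∫ ξ in (2 * l t - x)..(l t), ρf (ξ, t)))) :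
    ∀ t : ℝ, ∀ x ∈ Set.Ioo (l t) L,
      fderiv ℝ wc (x, t) ((0 : ℝ), (1 : ℝ)) -
        u * fderiv ℝ wc (x, t) ((1 : ℝ), (0 : ℝ)) =
      (Kc * b / u) * deriv l t *
        (ρf (l t, t) - ρc (l t, t) - 2 * ρf (2 * l t - x, t)) :=
  target_pde_congested_regime_general u b Kc L lstar hu l hl X hX ρf ρc hρf hρc hpdef hpdec hode wc
    hwc
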